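/- Let r ≥ 2 be a natural number, let d' : Fin r → ℤ be a nonincreasing tuple (d' i ≥ d' j whenever i ≤ j), and let d be an integer with d ≥ d' 0. Then there exists a unique nonincreasing tuple d'' : Fin r → ℤ with ∑_{i : Fin r} d'' i = ∑_{i : Fin r} d' i such that for every integer e, ∑_{i : Fin r} max(d'' i + e + 1, 0) = max( max(d + e + 1, 0), ∑_{i : Fin r} max(d' i + e + 1, 0) ). -/

import Mathlib

/-!
Write `h0 a e = ∑ i, max (a i + e + 1) 0`. Its first difference `h0 a e - h0 a (e - 1)` counts
the entries `a i ≥ -e`, and these counts determine a nonincreasing tuple: this is uniqueness.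

For existence, raise `d` one step at a time starting from `d' 0`. If `c` is nonincreasing with
`c 0 = d`, then `h0 c e ≥ max (d + e + 1) 0`, with equality exactly when `e < -c 1`. Replacing
`c 0` by `d + 1` and the last entry equal to `c 1` by `c 1 - 1` keeps `c` nonincreasing and keeps
its sum, and it adds `1` to `h0 c e` exactly for `-d - 1 ≤ e < -c 1`, which is where
`d + e + 2 > h0 c e`.
-/

open Finset

theorem Antitone.le_apply_iff_lt_card_filter {α : Type*} [LinearOrder α] {r : ℕ}
    {a : Fin r → α} (ha : Antitone a) (t : α) (i : Fin r) :
    t ≤ a i ↔ (i : ℕ) < #{x | t ≤ a x} := by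
  constructor
  · intro h
    have hsub : Iic i ⊆ ({x | t ≤ a x} : Finset (Fin r)) := fun x hx =>
      mem_filter.2 ⟨mem_univ x, h.trans (ha (mem_Iic.1 hx))⟩
    simpa using card_le_card hsub
  · intro h
    by_contra! hlt
    have hsub : ({x | t ≤ a x} : Finset (Fin r)) ⊆ Iio i := fun x hx => by
      rw [mem_Iio]
      by_contra! hix
      exact (ha hix).not_gt (hlt.trans_le (mem_filter.1 hx).2)
    simpa using (card_le_card hsub).trans_lt' h

theorem Antitone.eq_of_card_filter_le_eq {α : Type*} [LinearOrder α] {r : ℕ}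
    {a b : Fin r → α} (ha : Antitone a) (hb : Antitone b)
    (h : ∀ t, #{i | t ≤ a i} = #{i | t ≤ b i}) : a = b := by
  funext i
  have hab := (ha.le_apply_iff_lt_card_filter (a i) i).1 le_rfl
  have hba := (hb.le_apply_iff_lt_card_filter (b i) i).1 le_rfl
  rw [h, ← hb.le_apply_iff_lt_card_filter] at hab
  rw [← h, ← ha.le_apply_iff_lt_card_filter] at hba
  exact le_antisymm hab hba

theorem Fin.antitone_cons {α : Type*} [Preorder α] {n : ℕ} {t : Fin (n + 1) → α}
    (ht : Antitone t) {x : α} (hx : t 0 ≤ x) : Antitone (Fin.cons x t : Fin (n + 2) → α) := by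
  refine Fin.antitone_iff_succ_le.2 fun i => ?_
  cases i using Fin.cases with
  | zero => simpa using hx
  | succ i => simpa using ht (Fin.castSucc_le_succ i)

theorem Antitone.exists_decrement_head {n : ℕ} {t : Fin (n + 1) → ℤ} (ht : Antitone t) :
    ∃ t' : Fin (n + 1) → ℤ, Antitone t' ∧ t' ≤ t ∧
      ∀ g : ℤ → ℤ, ∑ i, g (t' i) + g (t 0) = ∑ i, g (t i) + g (t 0 - 1) := by
  have hne : ({i | t i = t 0} : Finset (Fin (n + 1))).Nonempty := ⟨0, by simp⟩
  set j := ({i | t i = t 0} : Finset (Fin (n + 1))).max' hne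
  have htj : t j = t 0 := by simpa using max'_mem _ hne
  have hafter : ∀ i, j < i → t i < t 0 := fun i hji =>
    (ht (Fin.zero_le i)).lt_of_ne fun hi => (le_max' _ i (by simpa using hi)).not_gt hji
  refine ⟨Function.update t j (t 0 - 1), fun i i' hii' => ?_, fun i => ?_, fun g => ?_⟩
  · simp only [Function.update_apply]
    have := ht hii'
    split_ifs with hi' hi hi
    · rfl
    · subst hi'; omega
    · subst hi; have := hafter i' (lt_of_le_of_ne hii' (Ne.symm hi')); omega
    · exact this
  · simp only [Function.update_apply]
    split_ifs with h
    · subst h; omega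
    · rfl
  · rw [← sum_erase_add _ _ (mem_univ j), ← sum_erase_add _ _ (mem_univ j)]
    simp only [Function.update_self, htj]
    rw [sum_congr rfl fun i hi => by rw [Function.update_of_ne (ne_of_mem_erase hi)]]
    ring

namespace SplittingType

/-- `h⁰(ℙ¹, ⊕ᵢ 𝒪(a i + e))` -/
def h0 {ι : Type*} [Fintype ι] (a : ι → ℤ) (e : ℤ) : ℤ := ∑ i, max (a i + e + 1) 0

section Fintype

variable {ι : Type*} [Fintype ι]

lemma h0_nonneg (a : ι → ℤ) (e : ℤ) : 0 ≤ h0 a e :=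
  sum_nonneg fun _ _ => le_max_right _ _

lemma le_h0 (a : ι → ℤ) (e : ℤ) (i : ι) : max (a i + e + 1) 0 ≤ h0 a e :=
  single_le_sum (f := fun i => max (a i + e + 1) 0) (fun _ _ => le_max_right _ _) (mem_univ i)

lemma h0_eq_zero {a : ι → ℤ} {e : ℤ} (h : ∀ i, a i + e + 1 ≤ 0) : h0 a e = 0 :=
  sum_eq_zero fun i _ => max_eq_right (h i)

lemma h0_eq_h0_sub_one_add_card (a : ι → ℤ) (e : ℤ) :
    h0 a e = h0 a (e - 1) + #{i | -e ≤ a i} := by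
  rw [h0, h0, natCast_card_filter, ← sum_add_distrib]
  refine sum_congr rfl fun i _ => ?_
  split_ifs <;> omega

end Fintype

lemma h0_cons {n : ℕ} (x : ℤ) (t : Fin n → ℤ) (e : ℤ) :
    h0 (Fin.cons x t : Fin (n + 1) → ℤ) e = max (x + e + 1) 0 + h0 t e := by
  simp only [h0, Fin.sum_univ_succ, Fin.cons_zero, Fin.cons_succ]

theorem eq_of_h0_eq {r : ℕ} {a b : Fin r → ℤ} (ha : Antitone a) (hb : Antitone b)
    (h : ∀ e, h0 a e = h0 b e) : a = b :=
  ha.eq_of_card_filter_le_eq hb fun t => by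
    have hcard := h0_eq_h0_sub_one_add_card a (-t)
    rw [h, h, h0_eq_h0_sub_one_add_card b (-t), neg_neg] at hcard
    exact_mod_cast (add_left_cancel hcard).symm

theorem exists_h0_eq_max_succ {n : ℕ} {c : Fin (n + 2) → ℤ} (hc : Antitone c) :
    ∃ c' : Fin (n + 2) → ℤ, Antitone c' ∧ c' 0 = c 0 + 1 ∧ ∑ i, c' i = ∑ i, c i ∧
      ∀ e, h0 c' e = max (max (c 0 + 1 + e + 1) 0) (h0 c e) := by
  obtain ⟨x, t, rfl⟩ : ∃ x t, c = Fin.cons x t := ⟨c 0, Fin.tail c, (Fin.cons_self_tail c).symm⟩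
  have ht : Antitone t := hc.comp_monotone Fin.strictMono_succ.monotone
  have htx : t 0 ≤ x := hc (Fin.zero_le 1)
  obtain ⟨t', ht', ht't, hsum⟩ := ht.exists_decrement_head
  refine ⟨Fin.cons (x + 1) t', Fin.antitone_cons ht' (by linarith [ht't 0]), rfl, ?_,
    fun e => ?_⟩
  · have := hsum id
    simp only [Fin.sum_cons, id] at this ⊢
    linarith
  · have hdec : h0 t' e + max (t 0 + e + 1) 0 = h0 t e + max (t 0 - 1 + e + 1) 0 :=
      hsum fun x => max (x + e + 1) 0
    simp only [h0_cons, Fin.cons_zero]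
    by_cases hte : 0 ≤ t 0 + e
    · have := le_h0 t e 0
      omega
    · have hzero : h0 t e = 0 := h0_eq_zero fun i => by linarith [ht (Fin.zero_le i)]
      have := h0_nonneg t' e
      omega

theorem exists_h0_eq_max {n : ℕ} {a : Fin (n + 2) → ℤ} (ha : Antitone a) {d : ℤ}
    (hd : a 0 ≤ d) :
    ∃ c : Fin (n + 2) → ℤ, Antitone c ∧ c 0 = d ∧ ∑ i, c i = ∑ i, a i ∧
      ∀ e, h0 c e = max (max (d + e + 1) 0) (h0 a e) := by
  induction d, hd using Int.leInduction with
  | base => exact ⟨a, ha, rfl, rfl, fun e => (max_eq_right (le_h0 a e 0)).symm⟩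
  | succ d _ ih =>
    obtain ⟨c, hc, hc0, hcsum, hch0⟩ := ih
    obtain ⟨c', hc', hc'0, hc'sum, hc'h0⟩ := exists_h0_eq_max_succ hc
    refine ⟨c', hc', hc0 ▸ hc'0, hc'sum.trans hcsum, fun e => ?_⟩
    rw [hc'h0, hch0, hc0]
    omega

end SplittingType

open SplittingType in
/-- Given a nonincreasing tuple `d'` and an integer `d ≥ d' 0`, there is a unique
nonincreasing tuple `d''` of the same total sum whose `h⁰`-function is the pointwise
maximum of the `h⁰`-function of `O(d)` and that of `d'`. -/
theorem existsUnique_splitting_type_max_h0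
    (r : ℕ) (hr : 2 ≤ r) (d' : Fin r → ℤ)
    (hd' : ∀ i j : Fin r, i ≤ j → d' j ≤ d' i)
    (d : ℤ) (hd : d' ⟨0, by omega⟩ ≤ d) :
    ∃! d'' : Fin r → ℤ,
      (∀ i j : Fin r, i ≤ j → d'' j ≤ d'' i) ∧
      (∑ i : Fin r, d'' i = ∑ i : Fin r, d' i) ∧
      (∀ e : ℤ, ∑ i : Fin r, max (d'' i + e + 1) 0 =
        max (max (d + e + 1) 0) (∑ i : Fin r, max (d' i + e + 1) 0)) := by
  obtain ⟨n, rfl⟩ : ∃ n, r = n + 2 := ⟨r - 2, by omega⟩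
  obtain ⟨c, hc, -, hsum, hh0⟩ := exists_h0_eq_max hd' hd
  exact ⟨c, ⟨hc, hsum, hh0⟩, fun b ⟨hb, _, hbh0⟩ =>
    eq_of_h0_eq hb hc fun e => (hbh0 e).trans (hh0 e).symm⟩
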